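/- For all t ∈ (0, π/2): cos(t)^(1/3) < (2q+(q+3)cos t)/((3q+1)+2cos t) with q = 1, i.e. cos(t)^(1/3) < (2 + 4cos t)/(4 + 2cos t) = (1+2cos t)/(2+cos t) < sin t / t. -/

import Mathlib

theorem stmt10 (t : ℝ) (ht : t ∈ Set.Ioo 0 (Real.pi/2)) :
    Real.cos t ^ ((1:ℝ)/3) < (1 + 2*Real.cos t)/(2 + Real.cos t) ∧
    (1 + 2*Real.cos t)/(2 + Real.cos t) < Real.sin t / t := by
  obtain ⟨ht0, ht2⟩ := ht
  have hc : 0 < Real.cos t := Real.cos_pos_of_mem_Ioo ⟨by linarith [Real.pi_pos], ht2⟩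
  have hs : 0 < Real.sin t := Real.sin_pos_of_pos_of_lt_pi ht0 (by linarith [Real.pi_pos])
  have hc1 : Real.cos t < 1 := by nlinarith [Real.sin_sq_add_cos_sq t]
  set c := Real.cos t with hcdef
  have hden : 0 < 2 + c := by linarith
  constructor
  · -- c^(1/3) < (1+2c)/(2+c)
    have hr : 0 < (1 + 2*c)/(2 + c) := by positivity
    have hcube : c < ((1 + 2*c)/(2 + c))^3 := by
      rw [div_pow, lt_div_iff₀ (by positivity)]
      nlinarith [pow_pos (sub_pos.mpr hc1) 3, sq_nonneg (1-c), sq_nonneg c]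
    calc Real.cos t ^ ((1:ℝ)/3) < (((1 + 2*c)/(2 + c))^3) ^ ((1:ℝ)/3) :=
          Real.rpow_lt_rpow (le_of_lt hc) hcube (by norm_num)
      _ = (1 + 2*c)/(2 + c) := by
          rw [← Real.rpow_natCast ((1 + 2*c)/(2 + c)) 3, ← Real.rpow_mul (le_of_lt hr)]
          norm_num
  · -- (1+2c)/(2+c) < sin t / t
    set f : ℝ → ℝ := fun y => 2*Real.sin y + Real.sin y * Real.cos y - y - 2*(y*Real.cos y) with hf
    have hder : ∀ x : ℝ, HasDerivAt f (2*Real.sin x * (x - Real.sin x)) x := by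
      intro x
      have h1 := Real.hasDerivAt_sin x
      have h2 := Real.hasDerivAt_cos x
      have h := (((h1.const_mul 2).add (h1.mul h2)).sub (hasDerivAt_id x)).sub
        (((hasDerivAt_id x).mul h2).const_mul 2)
      refine h.congr_deriv ?_
      have := Real.sin_sq_add_cos_sq x
      simp only [id_eq]
      ring_nf
      nlinarith [this]
    have hmono : StrictMonoOn f (Set.Icc 0 (Real.pi/2)) := by
      apply strictMonoOn_of_deriv_pos (convex_Icc _ _)
      · exact Continuous.continuousOn (by fun_prop)
      · intro x hx
        rw [interior_Icc] at hx
        rw [(hder x).deriv]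
        have hsx : 0 < Real.sin x := Real.sin_pos_of_pos_of_lt_pi hx.1 (by linarith [Real.pi_pos, hx.2])
        have : Real.sin x < x := Real.sin_lt hx.1
        nlinarith
    have hf0 : f 0 = 0 := by simp [hf]
    have hft : 0 < f t := by
      have := hmono (Set.mem_Icc.mpr ⟨le_refl 0, by linarith [Real.pi_pos]⟩)
        (Set.mem_Icc.mpr ⟨le_of_lt ht0, le_of_lt ht2⟩) ht0
      rwa [hf0] at this
    rw [div_lt_div_iff₀ hden ht0]
    simp only [hf] at hft
    nlinarith [hft]
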